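/- arXiv:0902.4744 — 3 statements merged into one kernel-verified Lean document; each statement's English description precedes it below -/
import Mathlib

section
/- There exists a constant c > 0 such that for every n ≥ 2, every complex Hilbert space H, and every bi-orthogonal pair {v_1,...,v_n}, {w_1,...,w_n} in H (i.e. ⟨v_j, w_k⟩ = δ_{jk} for all 1 ≤ j,k ≤ n), one has log n ≤ c · (max_{1≤m≤n} ‖w_m‖) · (max_{1≤k≤n} ‖∑_{j=1}^k v_j‖). -/
/-!
Put `S k = v 0 + ⋯ + v k`, so that `⟪S m, w k⟫ = 1` for `k ≤ m` and `0` otherwise.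
The Hilbert-type form `∑ m k, ⟪x m, y k⟫ / (m - k + 1/2)` is the integral over `[0, 2π]` of
`⟪∑ e^{-imt} x m, ∑ e^{-ikt} y k⟫` against the symbol `-(i/2) e^{it/2}`, which has modulus `1/2`;
by Parseval it is at most `(π/2) (s ∑ ‖x m‖² + s⁻¹ ∑ ‖y k‖²)` for every `s > 0`. At `(S, w)` the
form equals `∑_{k ≤ m} 1/(m - k + 1/2) ≥ (n log n)/2`, whereas the bound with `s = max ‖w‖ / max ‖S‖`
is `π n max ‖S‖ max ‖w‖`.
-/

open Finset Real
open scoped InnerProductSpace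

theorem pow_self_le_factorial_sq (n : ℕ) : n ^ n ≤ n.factorial ^ 2 := by
  have pair : ∀ m ∈ range n, n ≤ (m + 1) * (n - 1 - m + 1) := by
    intro m hm
    obtain ⟨r, rfl⟩ := Nat.exists_eq_add_of_lt (mem_range.mp hm)
    rw [show m + r + 1 - 1 - m + 1 = r + 1 by omega]
    nlinarith
  calc n ^ n = ∏ _m ∈ range n, n := by rw [prod_const, card_range]
    _ ≤ ∏ m ∈ range n, (m + 1) * (n - 1 - m + 1) := prod_le_prod' pair
    _ = n.factorial ^ 2 := by
      rw [prod_mul_distrib, prod_range_reflect (· + 1), prod_range_add_one_eq_factorial, sq]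

theorem mul_log_le_two_mul_sum_log (n : ℕ) :
    n * log n ≤ 2 * ∑ m ∈ range n, log (m + 1) := by
  have hfac : ∑ m ∈ range n, log ((m : ℝ) + 1) = log n.factorial := by
    rw [← prod_range_add_one_eq_factorial, Nat.cast_prod, log_prod fun m _ => by positivity]
    push_cast; rfl
  rcases n.eq_zero_or_pos with rfl | hn
  · simp
  have h := log_le_log (by positivity) (Nat.cast_le.mpr (pow_self_le_factorial_sq n) :
    ((n ^ n : ℕ) : ℝ) ≤ _)
  push_cast [log_pow] at h
  linarith

theorem log_add_one_le_sum_Iic_inv (m : ℕ) :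
    log (m + 1) ≤ ∑ k ∈ Iic m, ((m : ℝ) - k + 1 / 2)⁻¹ := by
  calc log (m + 1) ≤ log (↑(m + 1 + 1)) := log_le_log (by positivity) (by push_cast; linarith)
    _ ≤ harmonic (m + 1) := log_add_one_le_harmonic (m + 1)
    _ = ∑ d ∈ range (m + 1), ((d : ℝ) + 1)⁻¹ := by simp [harmonic]
    _ ≤ ∑ d ∈ range (m + 1), ((d : ℝ) + 1 / 2)⁻¹ :=
      sum_le_sum fun d _ => inv_anti₀ (by positivity) (by linarith)
    _ = ∑ k ∈ Iic m, ((m : ℝ) - k + 1 / 2)⁻¹ := by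
      rw [← sum_range_reflect, ← Nat.range_succ_eq_Iic]
      refine sum_congr rfl fun k hk => ?_
      rw [Nat.cast_sub (by simp at hk; omega)]
      push_cast; ring_nf

theorem mul_log_le_two_mul_sum_sum_Iic_inv (n : ℕ) :
    n * log n ≤ 2 * ∑ m : Fin n, ∑ k ∈ Iic m, ((m : ℝ) - k + 1 / 2)⁻¹ := by
  have hrow (m : Fin n) : ∑ k ∈ Iic m, ((m : ℝ) - k + 1 / 2)⁻¹
      = ∑ k ∈ Iic (m : ℕ), ((m : ℝ) - k + 1 / 2)⁻¹ := by
    rw [← Fin.map_valEmbedding_Iic, sum_map]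
    rfl
  simp_rw [hrow, Fin.sum_univ_eq_sum_range (fun m => ∑ k ∈ Iic m, ((m : ℝ) - k + 1 / 2)⁻¹)]
  calc (n : ℝ) * log n ≤ 2 * ∑ m ∈ range n, log (m + 1) := mul_log_le_two_mul_sum_log n
    _ ≤ _ := by gcongr with m; exact log_add_one_le_sum_Iic_inv m

variable {H : Type*} [NormedAddCommGroup H] [InnerProductSpace ℂ H]

section Fourier

open Complex intervalIntegral

theorem integral_exp_int_sub_mul_I (a b : ℤ) :
    ∫ t in (0)..(2 * π), cexp ((a - b : ℤ) * I * t) = if a = b then (2 * π : ℂ) else 0 := by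
  split_ifs with hab
  · simp [hab]
  have hc : ((a - b : ℤ) * I : ℂ) ≠ 0 := by simp [sub_eq_zero, hab, I_ne_zero]
  rw [integral_exp_mul_complex hc, show ((a - b : ℤ) * I * ↑(2 * π) : ℂ)
    = (a - b : ℤ) * (2 * π * I) by push_cast; ring, exp_int_mul_two_pi_mul_I]
  simp

theorem integral_exp_int_add_half_mul_I (d : ℤ) :
    ∫ t in (0)..(2 * π), cexp ((d + 1 / 2) * I * t) = 2 * I / (d + 1 / 2) := by
  have hd : (d + 1 / 2 : ℂ) ≠ 0 := by
    intro h
    have h2 : ((2 * d + 1 : ℤ) : ℂ) = 0 := by push_cast; linear_combination 2 * h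
    norm_cast at h2
    omega
  have hc : ((d + 1 / 2) * I : ℂ) ≠ 0 := mul_ne_zero hd I_ne_zero
  rw [integral_exp_mul_complex hc, show ((d + 1 / 2) * I * ↑(2 * π) : ℂ)
      = d * (2 * π * I) + π * I by push_cast; ring, Complex.exp_add, exp_int_mul_two_pi_mul_I,
      exp_pi_mul_I]
  field_simp
  norm_num

variable {ι : Type*} [Fintype ι]

theorem integral_sum_sum_exp_mul (a c : ι → ι → ℂ) :
    ∫ t in (0)..(2 * π), ∑ i, ∑ j, cexp (a i j * t) * c i j
      = ∑ i, ∑ j, (∫ t in (0)..(2 * π), cexp (a i j * t)) * c i j := by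
  rw [integral_finsetSum fun i _ => Continuous.intervalIntegrable (by fun_prop) _ _]
  refine sum_congr rfl fun i _ => ?_
  rw [integral_finsetSum fun j _ => Continuous.intervalIntegrable (by fun_prop) _ _]
  exact sum_congr rfl fun j _ => integral_mul_const _ _

noncomputable def trigPoly (e : ι → ℤ) (x : ι → H) (t : ℝ) : H :=
  ∑ i, cexp (-(e i * I) * t) • x i

theorem continuous_trigPoly (e : ι → ℤ) (x : ι → H) : Continuous (trigPoly e x) := by
  unfold trigPoly; fun_prop

theorem inner_trigPoly (e : ι → ℤ) (x y : ι → H) (t : ℝ) :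
    ⟪trigPoly e x t, trigPoly e y t⟫_ℂ = ∑ i, ∑ j, cexp ((e i - e j : ℤ) * I * t) * ⟪x i, y j⟫_ℂ := by
  refine (sum_inner _ _ _).trans (sum_congr rfl fun i _ => (inner_sum _ _ _).trans
    (sum_congr rfl fun j _ => ?_))
  rw [inner_smul_left, inner_smul_right, ← mul_assoc, ← exp_conj, ← Complex.exp_add]
  congr 2
  simp [conj_ofReal]
  ring

theorem integral_norm_sq_trigPoly {e : ι → ℤ} (he : Function.Injective e) (x : ι → H) :
    ∫ t in (0)..(2 * π), ‖trigPoly e x t‖ ^ 2 = 2 * π * ∑ i, ‖x i‖ ^ 2 := by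
  classical
  have hinner : ∫ t in (0)..(2 * π), ⟪trigPoly e x t, trigPoly e x t⟫_ℂ
      = (2 * π : ℂ) * ∑ i, ⟪x i, x i⟫_ℂ := by
    simp_rw [inner_trigPoly]
    rw [integral_sum_sum_exp_mul, mul_sum]
    refine sum_congr rfl fun i _ => ?_
    simp only [integral_exp_int_sub_mul_I, he.eq_iff, ite_mul, zero_mul, sum_ite_eq, mem_univ,
      if_true]
  have hnorm (t : ℝ) : ⟪trigPoly e x t, trigPoly e x t⟫_ℂ = ((‖trigPoly e x t‖ ^ 2 : ℝ) : ℂ) := by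
    rw [inner_self_eq_norm_sq_to_K]; norm_cast
  simp_rw [hnorm, intervalIntegral.integral_ofReal, inner_self_eq_norm_sq_to_K] at hinner
  exact ofReal_injective (by rw [hinner]; push_cast; rfl)

noncomputable def hilbertForm (e : ι → ℤ) (x y : ι → H) : ℂ :=
  ∑ i, ∑ j, ⟪x i, y j⟫_ℂ / ((e i - e j : ℤ) + 1 / 2)

theorem integral_mul_inner_trigPoly (e : ι → ℤ) (x y : ι → H) :
    ∫ t in (0)..(2 * π), (-I / 2 * cexp (↑(t / 2) * I)) * ⟪trigPoly e x t, trigPoly e y t⟫_ℂ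
      = hilbertForm e x y := by
  have hshift (t : ℝ) : (-I / 2 * cexp (↑(t / 2) * I)) * ⟪trigPoly e x t, trigPoly e y t⟫_ℂ
      = ∑ i, ∑ j, cexp (((e i - e j : ℤ) + 1 / 2) * I * t) * (-I / 2 * ⟪x i, y j⟫_ℂ) := by
    rw [inner_trigPoly, mul_sum]
    refine sum_congr rfl fun i _ => ?_
    rw [mul_sum]
    refine sum_congr rfl fun j _ => ?_
    rw [add_mul, add_mul, Complex.exp_add]
    push_cast
    ring_nf
  simp_rw [hshift, integral_sum_sum_exp_mul, integral_exp_int_add_half_mul_I]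
  refine sum_congr rfl fun i _ => sum_congr rfl fun j _ => ?_
  field_simp
  simp [neg_div]

theorem two_mul_le_mul_sq_add_inv_mul_sq {s : ℝ} (hs : 0 < s) (a b : ℝ) :
    2 * (a * b) ≤ s * a ^ 2 + s⁻¹ * b ^ 2 := by
  have key : 0 ≤ (s * a - b) ^ 2 / s := by positivity
  have expand : (s * a - b) ^ 2 / s = s * a ^ 2 + s⁻¹ * b ^ 2 - 2 * (a * b) := by
    field_simp; ring
  linarith

theorem norm_hilbertForm_le {e : ι → ℤ} (he : Function.Injective e) (x y : ι → H) {s : ℝ}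
    (hs : 0 < s) :
    ‖hilbertForm e x y‖ ≤ π / 2 * (s * ∑ i, ‖x i‖ ^ 2 + s⁻¹ * ∑ i, ‖y i‖ ^ 2) := by
  have hpoint (t : ℝ) : ‖(-I / 2 * cexp (↑(t / 2) * I)) * ⟪trigPoly e x t, trigPoly e y t⟫_ℂ‖
      ≤ (s * ‖trigPoly e x t‖ ^ 2 + s⁻¹ * ‖trigPoly e y t‖ ^ 2) / 4 := by
    rw [norm_mul, norm_mul, norm_exp_ofReal_mul_I]
    have := norm_inner_le_norm (𝕜 := ℂ) (trigPoly e x t) (trigPoly e y t)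
    have := two_mul_le_mul_sq_add_inv_mul_sq hs ‖trigPoly e x t‖ ‖trigPoly e y t‖
    simp only [norm_div, norm_neg, norm_I, RCLike.norm_ofNat]
    linarith
  have := continuous_trigPoly e x
  have := continuous_trigPoly e y
  rw [← integral_mul_inner_trigPoly]
  calc _ ≤ ∫ t in (0)..(2 * π), (s * ‖trigPoly e x t‖ ^ 2 + s⁻¹ * ‖trigPoly e y t‖ ^ 2) / 4 :=
        norm_integral_le_of_norm_le (by positivity) (.of_forall fun t _ => hpoint t)
          (Continuous.intervalIntegrable (by fun_prop) _ _)
    _ = π / 2 * (s * ∑ i, ‖x i‖ ^ 2 + s⁻¹ * ∑ i, ‖y i‖ ^ 2) := by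
      rw [intervalIntegral.integral_div, integral_add, integral_const_mul, integral_const_mul,
        integral_norm_sq_trigPoly he, integral_norm_sq_trigPoly he]
      · ring
      all_goals exact Continuous.intervalIntegrable (by fun_prop) _ _

end Fourier

theorem log_le_two_pi_mul_of_inner_eq_indicator_Iic {n : ℕ} (hn : 0 < n) (x y : Fin n → H)
    (hxy : ∀ m k, ⟪x m, y k⟫_ℂ = if k ∈ Iic m then 1 else 0) {V W : ℝ} (hx : ∀ m, ‖x m‖ ≤ V)
    (hy : ∀ k, ‖y k‖ ≤ W) :
    log n ≤ 2 * π * W * V := by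
  have hform : hilbertForm (fun i : Fin n => (i : ℤ)) x y
      = ((∑ m : Fin n, ∑ k ∈ Iic m, ((m : ℝ) - k + 1 / 2)⁻¹ : ℝ) : ℂ) := by
    simp only [hilbertForm, hxy, ite_div, zero_div, sum_ite_mem, univ_inter, one_div]
    push_cast
    rfl
  have h0 : 1 ≤ ‖x ⟨0, hn⟩‖ * ‖y ⟨0, hn⟩‖ := by
    simpa [hxy] using norm_inner_le_norm (𝕜 := ℂ) (x ⟨0, hn⟩) (y ⟨0, hn⟩)
  have hV : 0 < V := by nlinarith [norm_nonneg (x ⟨0, hn⟩), norm_nonneg (y ⟨0, hn⟩), hx ⟨0, hn⟩]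
  have hW : 0 < W := by nlinarith [norm_nonneg (x ⟨0, hn⟩), norm_nonneg (y ⟨0, hn⟩), hy ⟨0, hn⟩]
  have hsum {z : Fin n → H} {C : ℝ} (hz : ∀ i, ‖z i‖ ≤ C) : ∑ i, ‖z i‖ ^ 2 ≤ n * C ^ 2 := by
    calc ∑ i, ‖z i‖ ^ 2 ≤ ∑ _i : Fin n, C ^ 2 :=
          sum_le_sum fun i _ => pow_le_pow_left₀ (norm_nonneg _) (hz i) 2
      _ = n * C ^ 2 := by simp
  have upper := norm_hilbertForm_le (e := fun i : Fin n => (i : ℤ))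
    (Nat.cast_injective.comp Fin.val_injective) x y (div_pos hW hV)
  rw [hform, Complex.norm_real] at upper
  have key : n * log n ≤ n * (2 * π * W * V) :=
    calc n * log n ≤ 2 * ∑ m : Fin n, ∑ k ∈ Iic m, ((m : ℝ) - k + 1 / 2)⁻¹ :=
          mul_log_le_two_mul_sum_sum_Iic_inv n
      _ ≤ 2 * (π / 2 * (W / V * ∑ i, ‖x i‖ ^ 2 + (W / V)⁻¹ * ∑ i, ‖y i‖ ^ 2)) := by
          gcongr; exact (le_norm_self _).trans upper
      _ ≤ 2 * (π / 2 * (W / V * (n * V ^ 2) + (W / V)⁻¹ * (n * W ^ 2))) := by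
          gcongr; exacts [hsum hx, hsum hy]
      _ = n * (2 * π * W * V) := by field_simp; ring
  exact le_of_mul_le_mul_left key (by exact_mod_cast hn)

/-- Theorem 1 (main result): there is an absolute constant `c > 0` such that for every
`n ≥ 2`, every complex Hilbert space `H`, and every bi-orthogonal pair
`v, w : Fin n → H` (i.e. `⟪v j, w k⟫ = δ_{jk}`), one has
`log n ≤ c * (max_m ‖w m‖) * (max_k ‖∑_{j ≤ k} v j‖)`. -/
theorem stmt0 :
    ∃ c : ℝ, 0 < c ∧
      ∀ (n : ℕ) (hn : 2 ≤ n),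
        ∀ (H : Type) [NormedAddCommGroup H] [InnerProductSpace ℂ H] [CompleteSpace H],
          ∀ (v w : Fin n → H),
            (∀ j k : Fin n, (inner ℂ (v j) (w k) : ℂ) = if j = k then 1 else 0) →
            Real.log n ≤
              c * ((Finset.univ : Finset (Fin n)).sup'
                    ⟨⟨0, by omega⟩, Finset.mem_univ _⟩ fun m => ‖w m‖)
                * ((Finset.univ : Finset (Fin n)).sup'
                    ⟨⟨0, by omega⟩, Finset.mem_univ _⟩ fun k => ‖∑ j ∈ Finset.Iic k, v j‖) := by
  refine ⟨2 * π, by positivity, fun n hn H _ _ _ v w hvw => ?_⟩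
  refine log_le_two_pi_mul_of_inner_eq_indicator_Iic (by omega) (fun k => ∑ j ∈ Iic k, v j) w
    (fun m k => ?_) (fun k => le_sup' (fun k => ‖∑ j ∈ Iic k, v j‖) (mem_univ k))
    (fun m => le_sup' (fun m => ‖w m‖) (mem_univ m))
  rw [sum_inner]
  simp only [hvw, sum_ite_eq']
end

section
/- Let {v_1,...,v_n} and {w_1,...,w_n} be a bi-orthogonal pair in a Hilbert space H with all w_k ≠ 0, let F_1,...,F_n be orthonormal in L²([0,1]), let f_1 ≥ ... ≥ f_n be pointwise decreasing indicator functions of measurable subsets of [0,1], and let G ∈ L²([0,1]). Then ∑_{k=1}^n |∫_{[0,1]} G f_k \overline{F_k} dλ|² / ‖w_k‖²_H ≤ ‖G‖²₂ · max_{1≤k≤n} ‖∑_{j=1}^k v_j‖²_H. -/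
/-!
Put `P(x) = G(x) • ∑ⱼ fⱼ(x) vⱼ` and `pₖ(x) = Fₖ(x) • wₖ` in `L²(μ, H)`. Orthonormality of the `Fₖ`
makes the `pₖ` pairwise orthogonal with `‖pₖ‖ = ‖wₖ‖`, and bi-orthogonality gives
`⟪pₖ, P⟫ = ∫ G fₖ conj Fₖ`, so the left-hand side is Bessel's sum `∑ₖ |⟪pₖ, P⟫|² / ‖pₖ‖² ≤ ‖P‖²`.
Pointwise the `fⱼ(x)` are `0`/`1` and decreasing in `j`, so `∑ⱼ fⱼ(x) vⱼ` is a partial sum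
`∑_{j ≤ m} vⱼ`, which bounds `‖P(x)‖²` by `‖G(x)‖² · maxₖ ‖∑_{j ≤ k} vⱼ‖²`.
-/

open MeasureTheory Finset
open scoped ComplexConjugate InnerProductSpace

section InnerProduct

variable {𝕜 E : Type*} [RCLike 𝕜] [NormedAddCommGroup E] [InnerProductSpace 𝕜 E]

theorem sum_norm_inner_sq_div_norm_sq_le {ι : Type*} [Fintype ι] {p : ι → E}
    (hp : Pairwise fun i j => ⟪p i, p j⟫_𝕜 = 0) (hp0 : ∀ i, p i ≠ 0) (x : E) :
    ∑ i, ‖⟪p i, x⟫_𝕜‖ ^ 2 / ‖p i‖ ^ 2 ≤ ‖x‖ ^ 2 := by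
  classical
  have hon : Orthonormal 𝕜 fun i => (‖p i‖⁻¹ : 𝕜) • p i := by
    rw [orthonormal_iff_ite]
    intro i j
    rw [inner_smul_left, inner_smul_right]
    rcases eq_or_ne i j with rfl | hij
    · have : (‖p i‖ : 𝕜) ≠ 0 := by simpa using hp0 i
      simp only [inner_self_eq_norm_sq_to_K, RCLike.conj_inv, RCLike.conj_ofReal, if_true]
      field_simp
    · simp [hp hij, hij]
  calc ∑ i, ‖⟪p i, x⟫_𝕜‖ ^ 2 / ‖p i‖ ^ 2 = ∑ i, ‖⟪(‖p i‖⁻¹ : 𝕜) • p i, x⟫_𝕜‖ ^ 2 := by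
        congr! 1 with i
        rw [inner_smul_left, norm_mul, mul_pow]
        simp [div_eq_inv_mul]
    _ ≤ ‖x‖ ^ 2 := hon.sum_inner_products_le x

theorem inner_sum_smul_of_biorthogonal {ι : Type*} [DecidableEq ι] {s : Finset ι} {v w : ι → E}
    (hbi : ∀ j ∈ s, ∀ k ∈ s, ⟪v j, w k⟫_𝕜 = if j = k then 1 else 0) (c : ι → 𝕜) {k : ι}
    (hk : k ∈ s) : ⟪w k, ∑ j ∈ s, c j • v j⟫_𝕜 = c k := by
  rw [inner_sum]
  calc ∑ j ∈ s, ⟪w k, c j • v j⟫_𝕜 = ∑ j ∈ s, if j = k then c j else 0 := by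
        refine sum_congr rfl fun j hj => ?_
        rw [inner_smul_right, ← inner_conj_symm, hbi j hj k hk]
        split_ifs <;> simp
    _ = c k := by rw [sum_ite_eq', if_pos hk]

end InnerProduct

namespace MeasureTheory.L2

variable {α 𝕜 E : Type*} [MeasurableSpace α] {μ : Measure α} [RCLike 𝕜]
  [NormedAddCommGroup E] [InnerProductSpace 𝕜 E]

theorem inner_toLp_toLp {f g : α → E} (hf : MemLp f 2 μ) (hg : MemLp g 2 μ) :
    ⟪hf.toLp f, hg.toLp g⟫_𝕜 = ∫ a, ⟪f a, g a⟫_𝕜 ∂μ := by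
  rw [inner_def]
  refine integral_congr_ae ?_
  filter_upwards [hf.coeFn_toLp, hg.coeFn_toLp] with a hfa hga
  rw [hfa, hga]

theorem sum_norm_integral_inner_sq_div_le {ι : Type*} [DecidableEq ι] (s : Finset ι)
    {F : ι → α → 𝕜} (hF : ∀ i ∈ s, MemLp (F i) 2 μ)
    (hFon : ∀ i ∈ s, ∀ j ∈ s, ∫ a, F j a * conj (F i a) ∂μ = if j = i then 1 else 0)
    {w : ι → E} (hw : ∀ i ∈ s, w i ≠ 0) {Φ : α → E} (hΦ : MemLp Φ 2 μ) :
    ∑ i ∈ s, ‖∫ a, ⟪F i a • w i, Φ a⟫_𝕜 ∂μ‖ ^ 2 / ‖w i‖ ^ 2 ≤ ∫ a, ‖Φ a‖ ^ 2 ∂μ := by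
  have hFw (i : s) : MemLp (fun a => F i a • w i) 2 μ :=
    (hF i i.2).of_le_mul ((hF i i.2).1.smul_const _)
      (ae_of_all _ fun a => ((norm_smul _ _).trans (mul_comm _ _)).le)
  set p : s → Lp E 2 μ := fun i => (hFw i).toLp _
  have hpp (i j : s) : ⟪p i, p j⟫_𝕜 = (if (j : ι) = i then 1 else 0) * ⟪w i, w j⟫_𝕜 := by
    simp only [p, inner_toLp_toLp, inner_smul_left, inner_smul_right, ← mul_assoc]
    rw [integral_mul_const, ← hFon i i.2 j j.2]
  have hpw (i : s) : ‖p i‖ ^ 2 = ‖w i‖ ^ 2 := by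
    rw [← inner_self_eq_norm_sq (𝕜 := 𝕜), hpp, if_pos rfl, one_mul, inner_self_eq_norm_sq]
  have hp0 (i : s) : p i ≠ 0 := fun h => hw i i.2 (by simpa [h] using (hpw i).symm)
  have hΦnorm : ‖hΦ.toLp Φ‖ ^ 2 = ∫ a, ‖Φ a‖ ^ 2 ∂μ := by
    rw [← inner_self_eq_norm_sq (𝕜 := 𝕜), inner_toLp_toLp]
    simp_rw [inner_self_eq_norm_sq_to_K, ← RCLike.ofReal_pow]
    rw [integral_ofReal, RCLike.ofReal_re]
  have hbessel := sum_norm_inner_sq_div_norm_sq_le (𝕜 := 𝕜) (p := p)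
    (fun i j hij => by simp only [hpp, if_neg (Subtype.coe_ne_coe.mpr hij.symm), zero_mul])
    hp0 (hΦ.toLp Φ)
  simp only [hpw, p, inner_toLp_toLp, hΦnorm] at hbessel
  rwa [sum_coe_sort s (fun i => ‖∫ a, ⟪F i a • w i, Φ a⟫_𝕜 ∂μ‖ ^ 2 / ‖w i‖ ^ 2)] at hbessel

end MeasureTheory.L2

theorem exists_eq_ite_le_of_antitone {c : ℕ → ℝ} {n : ℕ}
    (hc01 : ∀ j ∈ Icc 1 n, c j = 0 ∨ c j = 1) (hc : ∀ k, 1 ≤ k → k < n → c (k + 1) ≤ c k) :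
    ∃ m ≤ n, ∀ j ∈ Icc 1 n, c j = if j ≤ m then 1 else 0 := by
  induction n with
  | zero => exact ⟨0, le_rfl, by simp⟩
  | succ n ih =>
    obtain ⟨m, hmn, hm⟩ := ih (fun j hj => hc01 j (Icc_subset_Icc_right n.le_succ hj))
      (fun k hk hkn => hc k hk (hkn.trans n.lt_succ_self))
    rcases hc01 (n + 1) (by simp) with hlast | hlast
    · refine ⟨m, hmn.trans n.le_succ, fun j hj => ?_⟩
      rcases (mem_Icc.mp hj).2.lt_or_eq with hjn | rfl
      · exact hm j (mem_Icc.mpr ⟨(mem_Icc.mp hj).1, Nat.lt_succ_iff.mp hjn⟩)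
      · simp [hlast, show ¬ n + 1 ≤ m by omega]
    · refine ⟨n + 1, le_rfl, fun j hj => ?_⟩
      simp only [(mem_Icc.mp hj).2, if_true]
      rcases (mem_Icc.mp hj).2.lt_or_eq with hjn | rfl
      · -- `c n ≥ c (n + 1) = 1` forces `m = n`, so every earlier coefficient is `1` too
        have hn : 1 ≤ n := by have := (mem_Icc.mp hj).1; omega
        have hcn := hc n hn n.lt_succ_self
        rw [hlast, hm n (mem_Icc.mpr ⟨hn, le_rfl⟩)] at hcn
        have hnm : n ≤ m := by
          by_contra h
          rw [if_neg h] at hcn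
          norm_num at hcn
        rw [hm j (mem_Icc.mpr ⟨(mem_Icc.mp hj).1, by omega⟩), if_pos (by omega)]
      · exact hlast

theorem sum_Icc_ite_le_smul {𝕜 M : Type*} [Semiring 𝕜] [AddCommMonoid M] [Module 𝕜 M]
    {m n : ℕ} (hmn : m ≤ n) (v : ℕ → M) :
    ∑ j ∈ Icc 1 n, (if j ≤ m then (1 : 𝕜) else 0) • v j = ∑ j ∈ Icc 1 m, v j := by
  simp only [ite_smul, one_smul, zero_smul]
  rw [← sum_filter]
  congr 1
  ext j
  simp only [mem_filter, mem_Icc]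
  omega

theorem norm_sq_sum_smul_le_sup' {𝕜 E : Type*} [RCLike 𝕜] [NormedAddCommGroup E] [Module 𝕜 E]
    {n : ℕ} (hn : 1 ≤ n) (v : ℕ → E) {c : ℕ → ℝ}
    (hc01 : ∀ j ∈ Icc 1 n, c j = 0 ∨ c j = 1) (hc : ∀ k, 1 ≤ k → k < n → c (k + 1) ≤ c k) :
    ‖∑ j ∈ Icc 1 n, (c j : 𝕜) • v j‖ ^ 2
      ≤ (Icc 1 n).sup' (nonempty_Icc.mpr hn) (fun k => ‖∑ j ∈ Icc 1 k, v j‖ ^ 2) := by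
  obtain ⟨m, hmn, hm⟩ := exists_eq_ite_le_of_antitone hc01 hc
  have hsum : ∑ j ∈ Icc 1 n, (c j : 𝕜) • v j = ∑ j ∈ Icc 1 m, v j := by
    rw [← sum_Icc_ite_le_smul (𝕜 := 𝕜) hmn]
    refine sum_congr rfl fun j hj => ?_
    rw [hm j hj]
    split_ifs <;> simp
  rw [hsum]
  rcases Nat.eq_zero_or_pos m with rfl | hm0
  · calc ‖∑ j ∈ Icc 1 0, v j‖ ^ 2 = 0 := by simp
      _ ≤ _ := (sq_nonneg _).trans
        (le_sup' (fun k => ‖∑ j ∈ Icc 1 k, v j‖ ^ 2) (left_mem_Icc.mpr hn))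
  · exact le_sup' (fun k => ‖∑ j ∈ Icc 1 k, v j‖ ^ 2) (mem_Icc.mpr ⟨hm0, hmn⟩)

theorem stmt3_general
    (H : Type) [NormedAddCommGroup H] [InnerProductSpace ℂ H]
    (n : ℕ) (hn : 1 ≤ n) (v w : ℕ → H)
    (hbi : ∀ j ∈ Finset.Icc 1 n, ∀ k ∈ Finset.Icc 1 n,
      (inner ℂ (v j) (w k) : ℂ) = if j = k then 1 else 0)
    (hw : ∀ k ∈ Finset.Icc 1 n, w k ≠ 0)
    (μ : Measure ℝ)
    (F : ℕ → ℝ → ℂ)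
    (hF2 : ∀ k ∈ Finset.Icc 1 n, MemLp (F k) 2 μ)
    (hFon : ∀ j ∈ Finset.Icc 1 n, ∀ k ∈ Finset.Icc 1 n,
      ∫ x, F k x * (starRingEnd ℂ) (F j x) ∂μ = if k = j then 1 else 0)
    (f : ℕ → ℝ → ℝ)
    (hf_ind : ∀ k, 1 ≤ k → k ≤ n →
      ∃ s : Set ℝ, MeasurableSet s ∧ f k = s.indicator (fun _ => (1:ℝ)))
    (hf_dec : ∀ k, 1 ≤ k → k < n → ∀ x, f (k + 1) x ≤ f k x)
    (G : ℝ → ℂ) (hG : MemLp G 2 μ) :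
    ∑ k ∈ Finset.Icc 1 n,
        ‖∫ x, G x * f k x * (starRingEnd ℂ) (F k x) ∂μ‖ ^ 2 / ‖w k‖ ^ 2
      ≤ (∫ x, ‖G x‖ ^ 2 ∂μ) *
          (Finset.Icc 1 n).sup' (Finset.nonempty_Icc.mpr hn)
            (fun k => ‖∑ j ∈ Finset.Icc 1 k, v j‖ ^ 2) := by
  set M := (Icc 1 n).sup' (nonempty_Icc.mpr hn) (fun k => ‖∑ j ∈ Icc 1 k, v j‖ ^ 2)
  have hf01 : ∀ k ∈ Icc 1 n, ∀ x, f k x = 0 ∨ f k x = 1 := fun k hk x => by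
    obtain ⟨s, -, hfk⟩ := hf_ind k (mem_Icc.mp hk).1 (mem_Icc.mp hk).2
    rw [hfk]
    exact s.indicator_eq_zero_or_self _ x
  have hfmeas : ∀ k ∈ Icc 1 n, Measurable (f k) := fun k hk => by
    obtain ⟨s, hs, hfk⟩ := hf_ind k (mem_Icc.mp hk).1 (mem_Icc.mp hk).2
    rw [hfk]
    exact measurable_const.indicator hs
  set ψ : ℝ → H := fun x => ∑ j ∈ Icc 1 n, (f j x : ℂ) • v j
  have hψ (x : ℝ) : ‖ψ x‖ ^ 2 ≤ M :=
    norm_sq_sum_smul_le_sup' hn v (fun j hj => hf01 j hj x) (fun k hk hkn => hf_dec k hk hkn x)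
  have hΦ : MemLp (fun x => G x • ψ x) 2 μ := by
    refine MemLp.smul (p := 2) (q := ⊤) ?_ hG
    refine memLp_top_of_bound ?_ (Real.sqrt M) (ae_of_all _ fun x => ?_)
    · fun_prop
    · exact Real.le_sqrt_of_sq_le (hψ x)
  have hinner : ∀ k ∈ Icc 1 n, ∀ x,
      ⟪F k x • w k, G x • ψ x⟫_ℂ = G x * f k x * conj (F k x) := fun k hk x => by
    rw [inner_smul_left, inner_smul_right, inner_sum_smul_of_biorthogonal hbi _ hk]
    ring
  calc ∑ k ∈ Icc 1 n, ‖∫ x, G x * f k x * conj (F k x) ∂μ‖ ^ 2 / ‖w k‖ ^ 2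
      = ∑ k ∈ Icc 1 n, ‖∫ x, ⟪F k x • w k, G x • ψ x⟫_ℂ ∂μ‖ ^ 2 / ‖w k‖ ^ 2 := by
        refine sum_congr rfl fun k hk => ?_
        simp_rw [hinner k hk]
    _ ≤ ∫ x, ‖G x • ψ x‖ ^ 2 ∂μ := L2.sum_norm_integral_inner_sq_div_le _ hF2 hFon hw hΦ
    _ ≤ ∫ x, ‖G x‖ ^ 2 * M ∂μ := by
        refine integral_mono hΦ.norm.integrable_sq (hG.norm.integrable_sq.mul_const M) fun x => ?_
        rw [norm_smul, mul_pow]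
        exact mul_le_mul_of_nonneg_left (hψ x) (sq_nonneg _)
    _ = (∫ x, ‖G x‖ ^ 2 ∂μ) * M := integral_mul_const M _

/-- The key inequality (eq. 4 of the paper): for a bi-orthogonal pair `v, w` in `H`,
an orthonormal set `F₁,...,Fₙ` in `L²([0,1])`, decreasing indicator functions
`f₁ ≥ ... ≥ fₙ`, and `G ∈ L²([0,1])`:
`∑ₖ |∫ G fₖ conj(Fₖ) dλ|² / ‖wₖ‖² ≤ ‖G‖₂² · maxₖ ‖∑_{j≤k} vⱼ‖²`. -/
theorem stmt3
    (H : Type) [NormedAddCommGroup H] [InnerProductSpace ℂ H] [CompleteSpace H]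
    (n : ℕ) (hn : 1 ≤ n) (v w : ℕ → H)
    (hbi : ∀ j ∈ Finset.Icc 1 n, ∀ k ∈ Finset.Icc 1 n,
      (inner ℂ (v j) (w k) : ℂ) = if j = k then 1 else 0)
    (hw : ∀ k ∈ Finset.Icc 1 n, w k ≠ 0)
    (μ : Measure ℝ) (hμ : μ = volume.restrict (Set.Icc (0:ℝ) 1))
    (F : ℕ → ℝ → ℂ)
    (hF2 : ∀ k ∈ Finset.Icc 1 n, MemLp (F k) 2 μ)
    (hFon : ∀ j ∈ Finset.Icc 1 n, ∀ k ∈ Finset.Icc 1 n,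
      ∫ x, F k x * (starRingEnd ℂ) (F j x) ∂μ = if k = j then 1 else 0)
    (f : ℕ → ℝ → ℝ)
    (hf_ind : ∀ k, 1 ≤ k → k ≤ n →
      ∃ s : Set ℝ, MeasurableSet s ∧ f k = s.indicator (fun _ => (1:ℝ)))
    (hf_dec : ∀ k, 1 ≤ k → k < n → ∀ x, f (k + 1) x ≤ f k x)
    (G : ℝ → ℂ) (hG : MemLp G 2 μ) :
    ∑ k ∈ Finset.Icc 1 n,
        ‖∫ x, G x * f k x * (starRingEnd ℂ) (F k x) ∂μ‖ ^ 2 / ‖w k‖ ^ 2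
      ≤ (∫ x, ‖G x‖ ^ 2 ∂μ) *
          (Finset.Icc 1 n).sup' (Finset.nonempty_Icc.mpr hn)
            (fun k => ‖∑ j ∈ Finset.Icc 1 k, v j‖ ^ 2) :=
  stmt3_general H n hn v w hbi hw μ F hF2 hFon f hf_ind hf_dec G hG
end

section
/- There is an absolute constant c > 0 such that: for every trigonometric polynomial p of degree at most N (N ≥ 1), the maximal function of its Fourier partial sums, S*p(x) = sup_{m≥1} |(D_m * p)(x)|, satisfies ‖S*p‖_{L¹(𝕋)} ≤ c · log(2N+1) · ‖p‖_{L¹(𝕋)}. -/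
/-!
For `n ≤ N` the partial sum `Sₙp` is the convolution of `p` with the Dirichlet kernel `Dₙ`, and
`|Dₙ(t)| ≤ K_N(t) := min (2N+1, 1/|sin(t/2)|)`, while `Sₙp = p` for `n ≥ N`. Hence pointwise
`S*p(x) ≤ (1/2π) ∫ |p(y)| K_N(x-y) dy`, and integrating in `x` (Fubini and periodicity of `K_N`)
gives `‖S*p‖₁ ≤ (1/2π) (∫₀^{2π} K_N) ‖p‖₁`. Splitting at `π/(2N+1)` and using
`sin(t/2) ≥ t/π` on `[0, π]` gives `∫₀^{2π} K_N ≤ 4π log(2N+1)`, so `c = 2` works.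
-/

open Real MeasureTheory

lemma Int.sum_Icc_sub {M : Type*} [AddCommGroup M] (f : ℤ → M) {a b : ℤ} (hab : a ≤ b + 1) :
    ∑ l ∈ Finset.Icc a b, (f (l + 1) - f l) = f (b + 1) - f a := by
  obtain ⟨n, rfl⟩ : ∃ n : ℕ, b = a - 1 + n := ⟨(b - (a - 1)).toNat, by omega⟩
  induction n with
  | zero => simp
  | succ n ih =>
    rw [Nat.cast_succ, ← add_assoc, ← Finset.insert_Icc_right_eq_Icc_add_one (by omega),
      Finset.sum_insert (by simp), ih (by omega)]
    abel

lemma Complex.exp_int_mul_ofReal_mul_I (k : ℤ) (t : ℝ) :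
    Complex.exp (k * t * Complex.I) = Complex.exp (t * Complex.I) ^ k := by
  rw [mul_assoc, Complex.exp_int_mul]

lemma Complex.norm_exp_ofReal_mul_I_sub_one (t : ℝ) :
    ‖Complex.exp (t * Complex.I) - 1‖ = 2 * |Real.sin (t / 2)| := by
  rw [mul_comm, Complex.norm_exp_I_mul_ofReal_sub_one, norm_mul, Real.norm_eq_abs,
    Real.norm_eq_abs, abs_two]

noncomputable def dirichletKernel (n : ℕ) (t : ℝ) : ℂ :=
  ∑ k ∈ Finset.Icc (-(n : ℤ)) n, Complex.exp (k * t * Complex.I)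

lemma norm_dirichletKernel_le (n : ℕ) (t : ℝ) : ‖dirichletKernel n t‖ ≤ 2 * n + 1 := by
  refine (norm_sum_le _ _).trans ?_
  simp only [Complex.exp_int_mul_ofReal_mul_I, norm_zpow, Complex.norm_exp_ofReal_mul_I, one_zpow,
    Finset.sum_const, Int.card_Icc, nsmul_eq_mul, mul_one]
  norm_cast
  omega

lemma sub_one_mul_dirichletKernel (n : ℕ) (t : ℝ) :
    (Complex.exp (t * Complex.I) - 1) * dirichletKernel n t
      = Complex.exp (t * Complex.I) ^ ((n : ℤ) + 1) - Complex.exp (t * Complex.I) ^ (-(n : ℤ)) := by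
  have hz : Complex.exp (t * Complex.I) ≠ 0 := Complex.exp_ne_zero _
  rw [dirichletKernel, Finset.mul_sum, ← Int.sum_Icc_sub _ (by omega)]
  refine Finset.sum_congr rfl fun k _ => ?_
  rw [Complex.exp_int_mul_ofReal_mul_I, zpow_add_one₀ hz]
  ring

lemma norm_dirichletKernel_mul_abs_sin_le (n : ℕ) (t : ℝ) :
    ‖dirichletKernel n t‖ * |sin (t / 2)| ≤ 1 := by
  have hnorm : ‖(Complex.exp (t * Complex.I) - 1) * dirichletKernel n t‖ ≤ 2 := by
    rw [sub_one_mul_dirichletKernel]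
    refine (norm_sub_le _ _).trans_eq ?_
    simp only [norm_zpow, Complex.norm_exp_ofReal_mul_I, one_zpow]
    norm_num
  rw [norm_mul, Complex.norm_exp_ofReal_mul_I_sub_one] at hnorm
  linarith

/-- `min (2N+1) |sin (t/2)|⁻¹`, written so that it also has the right value `2N+1` where
`sin (t/2) = 0` (with `min` the junk value `0⁻¹ = 0` would appear there). -/
noncomputable def dirichletMajorant (N : ℕ) (t : ℝ) : ℝ := (max (2 * N + 1 : ℝ)⁻¹ |sin (t / 2)|)⁻¹

lemma max_inv_abs_sin_pos (N : ℕ) (t : ℝ) : 0 < max (2 * N + 1 : ℝ)⁻¹ |sin (t / 2)| :=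
  lt_max_of_lt_left (by positivity)

@[fun_prop]
lemma continuous_dirichletMajorant (N : ℕ) : Continuous (dirichletMajorant N) :=
  Continuous.inv₀ (by fun_prop) fun t => (max_inv_abs_sin_pos N t).ne'

lemma dirichletMajorant_le (N : ℕ) (t : ℝ) : dirichletMajorant N t ≤ 2 * N + 1 :=
  inv_le_of_inv_le₀ (by positivity) (le_max_left _ _)

lemma dirichletMajorant_le_inv_abs_sin (N : ℕ) {t : ℝ} (ht : sin (t / 2) ≠ 0) :
    dirichletMajorant N t ≤ |sin (t / 2)|⁻¹ :=
  inv_anti₀ (abs_pos.2 ht) (le_max_right _ _)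

lemma norm_dirichletKernel_le_dirichletMajorant {n N : ℕ} (h : n ≤ N) (t : ℝ) :
    ‖dirichletKernel n t‖ ≤ dirichletMajorant N t := by
  rw [dirichletMajorant, ← one_div, le_div_iff₀ (max_inv_abs_sin_pos N t),
    mul_max_of_nonneg _ _ (norm_nonneg _)]
  refine max_le ?_ (norm_dirichletKernel_mul_abs_sin_le n t)
  rw [← div_eq_mul_inv, div_le_one (by positivity)]
  refine (norm_dirichletKernel_le n t).trans ?_
  gcongr

lemma periodic_dirichletMajorant (N : ℕ) : Function.Periodic (dirichletMajorant N) (2 * π) := by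
  intro t
  rw [dirichletMajorant, dirichletMajorant, add_div, mul_div_cancel_left₀ _ two_ne_zero,
    sin_add_pi, abs_neg]

lemma dirichletMajorant_two_pi_sub (N : ℕ) (t : ℝ) :
    dirichletMajorant N (2 * π - t) = dirichletMajorant N t := by
  rw [dirichletMajorant, dirichletMajorant, sub_div, mul_div_cancel_left₀ _ two_ne_zero,
    sin_pi_sub]

lemma dirichletMajorant_le_pi_div (N : ℕ) {t : ℝ} (ht : 0 < t) (htπ : t ≤ π) :
    dirichletMajorant N t ≤ π / t := by
  have hsin : t / π ≤ sin (t / 2) := by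
    have := mul_le_sin (x := t / 2) (by positivity) (by linarith)
    calc t / π = 2 / π * (t / 2) := by ring
      _ ≤ sin (t / 2) := this
  have hpos : 0 < t / π := by positivity
  calc dirichletMajorant N t ≤ |sin (t / 2)|⁻¹ :=
        dirichletMajorant_le_inv_abs_sin N (hpos.trans_le hsin).ne'
    _ ≤ (t / π)⁻¹ := inv_anti₀ hpos (hsin.trans (le_abs_self _))
    _ = π / t := inv_div _ _

lemma one_le_log_of_three_le {x : ℝ} (hx : 3 ≤ x) : 1 ≤ log x := by
  rw [le_log_iff_exp_le (by linarith)]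
  linarith [exp_one_lt_d9]

lemma integral_dirichletMajorant_le {N : ℕ} (hN : 1 ≤ N) :
    ∫ t in 0..2 * π, dirichletMajorant N t ≤ 4 * π * log (2 * N + 1) := by
  set L : ℝ := 2 * N + 1
  have hL : 3 ≤ L := by
    have : (1 : ℝ) ≤ N := by exact_mod_cast hN
    linarith
  have hint (a b : ℝ) := (continuous_dirichletMajorant N).intervalIntegrable (μ := volume) a b
  set δ := π / L
  have hδ : 0 < δ := by positivity
  have hδπ : δ ≤ π := div_le_self pi_pos.le (by linarith)
  have hnear : ∫ t in 0..δ, dirichletMajorant N t ≤ π := by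
    calc ∫ t in 0..δ, dirichletMajorant N t ≤ ∫ _ in 0..δ, L :=
          intervalIntegral.integral_mono_on hδ.le (hint _ _) intervalIntegrable_const
            fun t _ => dirichletMajorant_le N t
      _ = π := by
          rw [intervalIntegral.integral_const, sub_zero, smul_eq_mul,
            div_mul_cancel₀ _ (by positivity)]
  have hfar : ∫ t in δ..π, dirichletMajorant N t ≤ π * log L := by
    calc ∫ t in δ..π, dirichletMajorant N t ≤ ∫ t in δ..π, π / t := by
          refine intervalIntegral.integral_mono_on hδπ (hint _ _) ?_
            fun t ht => dirichletMajorant_le_pi_div N (hδ.trans_le ht.1) ht.2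
          exact (continuousOn_const.div continuousOn_id fun t ht =>
            (hδ.trans_le (Set.uIcc_of_le hδπ ▸ ht).1).ne').intervalIntegrable
      _ = π * log (π / δ) := by
          simp only [div_eq_mul_inv, intervalIntegral.integral_const_mul]
          rw [← div_eq_mul_inv, integral_inv_of_pos hδ pi_pos]
      _ = π * log L := by rw [div_div_cancel₀ pi_pos.ne']
  have hhalf : ∫ t in π..2 * π, dirichletMajorant N t = ∫ t in 0..π, dirichletMajorant N t := by
    have := intervalIntegral.integral_comp_sub_left (dirichletMajorant N) (a := 0) (b := π) (2 * π)
    simp only [dirichletMajorant_two_pi_sub, sub_zero] at this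
    rw [this, two_mul, add_sub_cancel_right]
  rw [← intervalIntegral.integral_add_adjacent_intervals (hint 0 π) (hint π _), hhalf,
    ← intervalIntegral.integral_add_adjacent_intervals (hint 0 δ) (hint δ π)]
  nlinarith [one_le_log_of_three_le hL, pi_pos]

noncomputable def trigPartialSum (c : ℤ → ℂ) (n : ℕ) (x : ℝ) : ℂ :=
  ∑ k ∈ Finset.Icc (-(n : ℤ)) n, c k * Complex.exp (k * x * Complex.I)

@[fun_prop]
lemma continuous_trigPartialSum (c : ℤ → ℂ) (n : ℕ) : Continuous (trigPartialSum c n) := by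
  unfold trigPartialSum
  fun_prop

lemma trigPartialSum_eq_of_le {c : ℤ → ℂ} {N n : ℕ} (hc : ∀ k : ℤ, (N : ℤ) < |k| → c k = 0)
    (h : N ≤ n) : trigPartialSum c n = trigPartialSum c N := by
  funext x
  refine (Finset.sum_subset (Finset.Icc_subset_Icc (by omega) (by omega)) fun k _ hk => ?_).symm
  rw [hc k (by rw [Finset.mem_Icc] at hk; rw [lt_abs]; omega), zero_mul]

lemma integral_exp_int_mul_I (k : ℤ) :
    ∫ x in 0..2 * π, Complex.exp (k * x * Complex.I) = if k = 0 then (2 * π : ℂ) else 0 := by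
  split_ifs with hk
  · simp [hk]
  · have hc : (k : ℂ) * Complex.I ≠ 0 := mul_ne_zero (by exact_mod_cast hk) Complex.I_ne_zero
    simp_rw [mul_right_comm _ _ Complex.I]
    rw [integral_exp_mul_complex hc]
    push_cast
    rw [show (k : ℂ) * Complex.I * (2 * π) = k * (2 * π * Complex.I) by ring,
      Complex.exp_int_mul_two_pi_mul_I]
    simp

lemma integral_trigPartialSum_mul_exp (c : ℤ → ℂ) {N : ℕ} {l : ℤ}
    (hl : l ∈ Finset.Icc (-(N : ℤ)) N) :
    ∫ y in 0..2 * π, trigPartialSum c N y * Complex.exp (-(l * y * Complex.I)) = 2 * π * c l := by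
  have hterm (k : ℤ) (y : ℝ) :
      c k * Complex.exp (k * y * Complex.I) * Complex.exp (-(l * y * Complex.I))
        = c k * Complex.exp ((k - l : ℤ) * y * Complex.I) := by
    rw [mul_assoc, ← Complex.exp_add]
    push_cast
    ring_nf
  simp only [trigPartialSum, Finset.sum_mul, hterm]
  rw [intervalIntegral.integral_finsetSum fun k _ => by
    exact (Continuous.intervalIntegrable (by fun_prop) _ _)]
  simp only [intervalIntegral.integral_const_mul, integral_exp_int_mul_I, sub_eq_zero, mul_ite,
    mul_zero, Finset.sum_ite_eq', if_pos hl]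
  ring

lemma integral_trigPartialSum_mul_dirichletKernel (c : ℤ → ℂ) {n N : ℕ} (h : n ≤ N) (x : ℝ) :
    ∫ y in 0..2 * π, trigPartialSum c N y * dirichletKernel n (x - y)
      = 2 * π * trigPartialSum c n x := by
  have hterm (l : ℤ) (y : ℝ) : trigPartialSum c N y * Complex.exp (l * (x - y : ℝ) * Complex.I)
      = Complex.exp (l * x * Complex.I) *
          (trigPartialSum c N y * Complex.exp (-(l * y * Complex.I))) := by
    rw [mul_left_comm, ← Complex.exp_add]
    push_cast
    ring_nf
  simp only [dirichletKernel, Finset.mul_sum, hterm]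
  rw [intervalIntegral.integral_finsetSum fun l _ => by
    exact Continuous.intervalIntegrable (by fun_prop) _ _]
  conv_rhs => rw [trigPartialSum, Finset.mul_sum]
  refine Finset.sum_congr rfl fun l hl => ?_
  rw [intervalIntegral.integral_const_mul, integral_trigPartialSum_mul_exp c
    (Finset.Icc_subset_Icc (by omega) (by omega) hl)]
  ring

lemma norm_trigPartialSum_le (c : ℤ → ℂ) {n N : ℕ} (h : n ≤ N) (x : ℝ) :
    ‖trigPartialSum c n x‖ ≤ (2 * π)⁻¹ *
      ∫ y in Set.Ioc 0 (2 * π), ‖trigPartialSum c N y‖ * dirichletMajorant N (x - y) := by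
  have hconv := integral_trigPartialSum_mul_dirichletKernel c h x
  rw [intervalIntegral.integral_of_le two_pi_pos.le] at hconv
  have hle : ‖∫ y in Set.Ioc 0 (2 * π), trigPartialSum c N y * dirichletKernel n (x - y)‖
      ≤ ∫ y in Set.Ioc 0 (2 * π), ‖trigPartialSum c N y‖ * dirichletMajorant N (x - y) := by
    refine norm_integral_le_of_norm_le (Continuous.integrableOn_Ioc (by fun_prop))
      (ae_of_all _ fun y => ?_)
    rw [norm_mul]
    exact mul_le_mul_of_nonneg_left (norm_dirichletKernel_le_dirichletMajorant h _) (norm_nonneg _)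
  have h2π : ‖(2 * π : ℂ)‖ = 2 * π := by norm_num [abs_of_pos pi_pos]
  rw [hconv, norm_mul, h2π] at hle
  rwa [le_inv_mul_iff₀ two_pi_pos]

lemma integrable_mul_comp_sub_prod {f g : ℝ → ℝ} (hf : Continuous f) (hg : Continuous g)
    (a b : ℝ) :
    Integrable (fun q : ℝ × ℝ => f q.2 * g (q.1 - q.2))
      ((volume.restrict (Set.Ioc a b)).prod (volume.restrict (Set.Ioc a b))) := by
  rw [Measure.prod_restrict, ← Measure.volume_eq_prod]
  refine IntegrableOn.mono_set ?_ (Set.prod_mono Set.Ioc_subset_Icc_self Set.Ioc_subset_Icc_self)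
  exact ContinuousOn.integrableOn_compact (isCompact_Icc.prod isCompact_Icc) (by fun_prop)

lemma integral_Ioc_integral_Ioc_mul_comp_sub {f g : ℝ → ℝ} {T : ℝ} (hT : 0 ≤ T)
    (hf : Continuous f) (hg : Continuous g) (hgT : Function.Periodic g T) :
    ∫ x in Set.Ioc 0 T, ∫ y in Set.Ioc 0 T, f y * g (x - y)
      = (∫ t in 0..T, g t) * ∫ y in Set.Ioc 0 T, f y := by
  have hshift (y : ℝ) : ∫ x in Set.Ioc 0 T, g (x - y) = ∫ t in 0..T, g t := by
    rw [← intervalIntegral.integral_of_le hT, intervalIntegral.integral_comp_sub_right,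
      zero_sub, sub_eq_neg_add, hgT.intervalIntegral_add_eq (-y) 0, zero_add]
  rw [integral_integral_swap (integrable_mul_comp_sub_prod hf hg 0 T)]
  simp only [integral_const_mul, hshift]
  rw [integral_mul_const, mul_comm]

lemma iSup_norm_trigPartialSum_le {c : ℤ → ℂ} {N : ℕ}
    (hc : ∀ k : ℤ, (N : ℤ) < |k| → c k = 0) (x : ℝ) :
    ⨆ m : ℕ, ‖trigPartialSum c (m + 1) x‖ ≤ (2 * π)⁻¹ *
      ∫ y in Set.Ioc 0 (2 * π), ‖trigPartialSum c N y‖ * dirichletMajorant N (x - y) := by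
  refine ciSup_le fun m => ?_
  rcases le_total (m + 1) N with h | h
  · exact norm_trigPartialSum_le c h x
  · rw [trigPartialSum_eq_of_le hc h]
    exact norm_trigPartialSum_le c le_rfl x

lemma integral_iSup_norm_trigPartialSum_le {c : ℤ → ℂ} {N : ℕ}
    (hc : ∀ k : ℤ, (N : ℤ) < |k| → c k = 0) :
    ∫ x in Set.Ioc 0 (2 * π), ⨆ m : ℕ, ‖trigPartialSum c (m + 1) x‖
      ≤ (2 * π)⁻¹ * ((∫ t in 0..2 * π, dirichletMajorant N t) *
          ∫ y in Set.Ioc 0 (2 * π), ‖trigPartialSum c N y‖) := by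
  have hp := (continuous_trigPartialSum c N).norm
  have hK := continuous_dirichletMajorant N
  have hH := (integrable_mul_comp_sub_prod hp hK 0 (2 * π)).integral_prod_left.const_mul (2 * π)⁻¹
  refine (integral_mono_of_nonneg (ae_of_all _ fun x => Real.iSup_nonneg fun m => norm_nonneg _)
    hH (ae_of_all _ (iSup_norm_trigPartialSum_le hc))).trans_eq ?_
  rw [integral_const_mul, integral_Ioc_integral_Ioc_mul_comp_sub two_pi_pos.le hp hK
    (periodic_dirichletMajorant N)]

/-- Lemma on Lebesgue constants: there is an absolute `c > 0` such that for every
trigonometric polynomial `p` of degree at most `N` (given by coefficients `coef`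
vanishing outside `[-N, N]`), the maximal function `S*p(x) = sup_{m ≥ 1} |Dₘ * p(x)|`
of its Fourier partial sums satisfies `‖S*p‖_{L¹(𝕋)} ≤ c log(2N+1) ‖p‖_{L¹(𝕋)}`. -/
theorem stmt12 :
    ∃ c : ℝ, 0 < c ∧
      ∀ (N : ℕ) (hN : 1 ≤ N) (coef : ℤ → ℂ),
        (∀ k : ℤ, (N : ℤ) < |k| → coef k = 0) →
        (1 / (2 * π)) * ∫ x in Set.Ioc (0:ℝ) (2 * π),
            (⨆ m : ℕ, ‖∑ k ∈ Finset.Icc (-(m + 1 : ℤ)) (m + 1 : ℤ),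
              coef k * Complex.exp (k * x * Complex.I)‖)
          ≤ c * Real.log (2 * N + 1) *
              ((1 / (2 * π)) * ∫ x in Set.Ioc (0:ℝ) (2 * π),
                ‖∑ k ∈ Finset.Icc (-(N : ℤ)) (N : ℤ),
                  coef k * Complex.exp (k * x * Complex.I)‖) := by
  refine ⟨2, two_pos, fun N hN c hc => ?_⟩
  change (1 / (2 * π)) * ∫ x in Set.Ioc 0 (2 * π), ⨆ m : ℕ, ‖trigPartialSum c (m + 1) x‖
    ≤ 2 * log (2 * N + 1) * ((1 / (2 * π)) * ∫ x in Set.Ioc 0 (2 * π), ‖trigPartialSum c N x‖)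
  calc (1 / (2 * π)) * ∫ x in Set.Ioc 0 (2 * π), ⨆ m : ℕ, ‖trigPartialSum c (m + 1) x‖
      ≤ (1 / (2 * π)) * ((2 * π)⁻¹ *
          ((4 * π * log (2 * N + 1)) * ∫ y in Set.Ioc 0 (2 * π), ‖trigPartialSum c N y‖)) := by
        gcongr
        exact (integral_iSup_norm_trigPartialSum_le hc).trans
          (by gcongr; exact integral_dirichletMajorant_le hN)
    _ = 2 * log (2 * N + 1) *
          ((1 / (2 * π)) * ∫ y in Set.Ioc 0 (2 * π), ‖trigPartialSum c N y‖) := by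
        field_simp
        ring
end
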